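/- arXiv:2604.05495 — 5 statements merged into one kernel-verified Lean document; each statement's English description precedes it below -/
import Mathlib

section
/- Let θ > 0 and let a ≠ b be two indices in {1,…,k}. Let Z(t) be a family of symmetric k×k real matrices such that the entries Z(t)_{ab} = Z(t)_{ba} = exp(−θ t), all other entries are constant in t, and Z(t) is invertible for every t in an open interval U. Define w(t) = Z(t)⁻¹ 𝟙 and F(t) = 𝟙ᵀ Z(t)⁻¹ 𝟙. Then for every t ∈ U, F has derivative F′(t) = 2θ·exp(−θ t)·w_a(t)·w_b(t). -/
attribute [local instance] Matrix.linftyOpNormedRing Matrix.linftyOpNormedAlgebra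
  Matrix.linftyOpNormedAddCommGroup Matrix.linftyOpNormedSpace

theorem stmt_7 (k : ℕ) (θ : ℝ) (hθ : 0 < θ) (a b : Fin k) (hab : a ≠ b)
    (U : Set ℝ) (hU : IsOpen U)
    (Z : ℝ → Matrix (Fin k) (Fin k) ℝ)
    (hsymm : ∀ t, (Z t).IsSymm)
    (hZab : ∀ t, Z t a b = Real.exp (-θ * t))
    (hZba : ∀ t, Z t b a = Real.exp (-θ * t))
    (hconst : ∀ i j, ¬((i = a ∧ j = b) ∨ (i = b ∧ j = a)) →
      ∀ s t, Z s i j = Z t i j)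
    (hinv : ∀ t ∈ U, IsUnit (Z t).det) :
    ∀ t ∈ U,
      HasDerivAt (fun s => ∑ i, ∑ j, (Z s)⁻¹ i j)
        (2 * θ * Real.exp (-θ * t) *
          ((Z t)⁻¹.mulVec (fun _ => 1) a) * ((Z t)⁻¹.mulVec (fun _ => 1) b)) t := by
  intro t ht
  classical
  set W := (Z t)⁻¹ with hW
  set E : Matrix (Fin k) (Fin k) ℝ :=
    Matrix.of fun i j => (if i = a ∧ j = b then (1:ℝ) else 0) +
      (if i = b ∧ j = a then (1:ℝ) else 0) with hEdef
  -- decomposition of Z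
  have hZs : ∀ s, Z s = Z t + (Real.exp (-θ * s) - Real.exp (-θ * t)) • E := by
    intro s
    ext i j
    by_cases h : (i = a ∧ j = b) ∨ (i = b ∧ j = a)
    · rcases h with ⟨rfl, rfl⟩ | ⟨rfl, rfl⟩ <;>
        simp [hEdef, hZab, hZba, hab, Ne.symm hab] <;> ring
    · have hc := hconst i j h s t
      have hE0 : E i j = 0 := by
        simp only [hEdef, Matrix.of_apply]
        rw [if_neg (by tauto), if_neg (by tauto)]
        ring
      simp [hc, hE0]
  -- derivative of the scalar coefficient
  have hf : HasDerivAt (fun s => Real.exp (-θ * s) - Real.exp (-θ * t))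
      (-θ * Real.exp (-θ * t)) t := by
    have h1 : HasDerivAt (fun s : ℝ => -θ * s) (-θ) t := by
      simpa using (hasDerivAt_id t).const_mul (-θ)
    have := (h1.exp).sub_const (Real.exp (-θ * t))
    simpa [mul_comm] using this
  -- derivative of Z
  have hZd : HasDerivAt Z ((-θ * Real.exp (-θ * t)) • E) t := by
    rw [show Z = fun s => Z t + (Real.exp (-θ * s) - Real.exp (-θ * t)) • E from funext hZs]
    exact (hf.smul_const E).const_add (Z t)
  -- the inverse as Ring.inverse
  obtain ⟨u, hu⟩ := (Matrix.isUnit_iff_isUnit_det (Z t)).2 (hinv t ht)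
  have huinv : ((u⁻¹ : (Matrix (Fin k) (Fin k) ℝ)ˣ) : Matrix (Fin k) (Fin k) ℝ) = W := by
    rw [hW, Matrix.nonsing_inv_eq_ringInverse, ← hu, Ring.inverse_unit]
  -- derivative of Ring.inverse ∘ Z
  have hinvd : HasDerivAt (fun s => Ring.inverse (Z s))
      ((θ * Real.exp (-θ * t)) • (W * E * W)) t := by
    have h := hasFDerivAt_ringInverse (𝕜 := ℝ) u
    rw [hu] at h
    have h2 := h.comp_hasDerivAt t hZd
    have h3 : HasDerivAt (fun s => Ring.inverse (Z s))
        (-(W * ((-θ * Real.exp (-θ * t)) • E) * W)) t := by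
      have h4 : HasDerivAt (fun s => Ring.inverse (Z s)) _ t := h2
      simpa [Function.comp, huinv] using h4
    convert h3 using 1
    rw [Matrix.mul_smul, Matrix.smul_mul, ← neg_smul]
    ring_nf
  -- sum of entries is a continuous linear map
  let L : Matrix (Fin k) (Fin k) ℝ →ₗ[ℝ] ℝ :=
    { toFun := fun M => ∑ i, ∑ j, M i j
      map_add' := by intro M N; simp [Finset.sum_add_distrib]
      map_smul' := by intro c M; simp [Finset.mul_sum] }
  have hL : HasDerivAt (fun s => ∑ i, ∑ j, (Ring.inverse (Z s)) i j)
      (∑ i, ∑ j, ((θ * Real.exp (-θ * t)) • (W * E * W)) i j) t :=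
    L.toContinuousLinearMap.hasFDerivAt.comp_hasDerivAt t hinvd
  -- rewrite goal
  simp only [Matrix.nonsing_inv_eq_ringInverse]
  convert hL using 1
  -- symmetry of W
  have hWsymm : ∀ i j : Fin k, W i j = W j i := by
    have h1 : W.transpose = W := by
      rw [hW, Matrix.transpose_nonsing_inv, (hsymm t).eq]
    intro i j
    calc W i j = W.transpose j i := rfl
      _ = W j i := by rw [h1]
  have hsum : ∀ c : Fin k, (∑ i, W i c) = ∑ i, W c i :=
    fun c => Finset.sum_congr rfl fun i _ => hWsymm i c
  have hmv : ∀ c, W.mulVec (fun _ => 1) c = ∑ j, W c j := by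
    intro c; simp [Matrix.mulVec, dotProduct]
  have hWEW : ∀ i j, (W * E * W) i j = W i a * W b j + W i b * W a j := by
    intro i j
    simp [Matrix.mul_apply, hEdef, mul_add, add_mul, Finset.sum_add_distrib, ite_and,
      mul_ite, ite_mul, Finset.sum_ite_eq, Finset.sum_ite_eq']
  have hentry : ∀ i j, ((θ * Real.exp (-θ * t)) • (W * E * W)) i j
      = (θ * Real.exp (-θ * t)) * (W i a * W b j) + (θ * Real.exp (-θ * t)) * (W i b * W a j) := by
    intro i j
    simp [hWEW, mul_add]
  rw [hmv a, hmv b]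
  simp only [hentry, Finset.sum_add_distrib, ← Finset.mul_sum]
  rw [← Finset.sum_mul, ← Finset.sum_mul, hsum a, hsum b]
  ring
end

section
/- Let k ≥ 2, θ > 0, 0 < λ, and set q = exp(−θλ), r = exp(−2θλ). Assume (k−1)·q < 1/4. Let a ≠ b be indices in {1,…,k} and let Z(t), for t ∈ [λ, 2λ], be a symmetric k×k matrix with diagonal entries 1, entries Z(t)_{ab} = Z(t)_{ba} = exp(−θ t), and all other off-diagonal entries constant in t and lying in the interval [r, q]. Then Z(t) is invertible for every t ∈ [λ, 2λ], and the function F(t) = 𝟙ᵀ Z(t)⁻¹ 𝟙 is strictly increasing on [λ, 2λ]; in particular F(2λ) > F(λ). -/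
open Matrix Finset

/-- If a matrix has unit diagonal and small off-diagonal entries, its kernel is trivial. -/
lemma aux_ker_zero {k : ℕ} (q : ℝ) (hq : 0 ≤ q) (hc : ((k : ℝ) - 1) * q < 1)
    (Z : Matrix (Fin k) (Fin k) ℝ) (hd : ∀ i, Z i i = 1)
    (hod : ∀ i j, i ≠ j → |Z i j| ≤ q)
    (x : Fin k → ℝ) (hx : Z.mulVec x = 0) : x = 0 := by
  funext i
  obtain ⟨i0, -, hmax⟩ := Finset.exists_max_image Finset.univ (fun j => |x j|)
    ⟨i, Finset.mem_univ i⟩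
  have hx0 : ∑ j, Z i0 j * x j = 0 := by
    have := congrFun hx i0
    simpa [Matrix.mulVec, dotProduct] using this
  have hsplit : x i0 = -(∑ j ∈ Finset.univ.erase i0, Z i0 j * x j) := by
    have := Finset.sum_erase_add Finset.univ (fun j => Z i0 j * x j) (Finset.mem_univ i0)
    rw [hx0] at this
    have : ∑ j ∈ Finset.univ.erase i0, Z i0 j * x j + Z i0 i0 * x i0 = 0 := this
    rw [hd i0] at this; linarith
  have hbound : |x i0| ≤ ((k : ℝ) - 1) * q * |x i0| := by
    calc |x i0| = |∑ j ∈ Finset.univ.erase i0, Z i0 j * x j| := by rw [hsplit, abs_neg]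
      _ ≤ ∑ j ∈ Finset.univ.erase i0, |Z i0 j * x j| := Finset.abs_sum_le_sum_abs _ _
      _ ≤ ∑ _j ∈ Finset.univ.erase i0, q * |x i0| := by
          refine Finset.sum_le_sum fun j hj => ?_
          have hji : j ≠ i0 := Finset.ne_of_mem_erase hj
          rw [abs_mul]
          exact mul_le_mul (hod i0 j (Ne.symm hji)) (hmax j (Finset.mem_univ j))
            (abs_nonneg _) hq
      _ = ((k : ℝ) - 1) * q * |x i0| := by
          rw [Finset.sum_const, Finset.card_erase_of_mem (Finset.mem_univ i0),
            Finset.card_univ, Fintype.card_fin, nsmul_eq_mul]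
          have hk1 : 1 ≤ k := i0.pos
          have : ((k - 1 : ℕ) : ℝ) = (k : ℝ) - 1 := by
            push_cast [Nat.cast_sub hk1]; ring
          rw [this]; ring
  have h0 : |x i0| = 0 := by nlinarith [abs_nonneg (x i0)]
  have hbi := hmax i (Finset.mem_univ i)
  rw [h0] at hbi
  simpa using abs_eq_zero.mp (le_antisymm hbi (abs_nonneg _))

/-- If `Z x = 1` with unit diagonal, small off-diagonal, then all entries of `x` are positive. -/
lemma aux_pos {k : ℕ} (q : ℝ) (hq : 0 ≤ q) (hc : ((k : ℝ) - 1) * q < 1 / 2)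
    (Z : Matrix (Fin k) (Fin k) ℝ) (hd : ∀ i, Z i i = 1)
    (hod : ∀ i j, i ≠ j → |Z i j| ≤ q)
    (x : Fin k → ℝ) (hx : Z.mulVec x = fun _ => 1) : ∀ i, 0 < x i := by
  intro i
  obtain ⟨i0, -, hmax⟩ := Finset.exists_max_image Finset.univ (fun j => |x j|)
    ⟨i, Finset.mem_univ i⟩
  set c : ℝ := ((k : ℝ) - 1) * q with hcdef
  have hc0 : 0 ≤ c := by
    have hk1 : (1 : ℝ) ≤ k := by exact_mod_cast i.pos
    have : (0:ℝ) ≤ (k : ℝ) - 1 := by linarith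
    exact mul_nonneg this hq
  have key : ∀ j : Fin k, |x j - 1| ≤ c * |x i0| := by
    intro j
    have hx0 : ∑ p, Z j p * x p = 1 := by
      have := congrFun hx j
      simpa [Matrix.mulVec, dotProduct] using this
    have hsplit : x j - 1 = -(∑ p ∈ Finset.univ.erase j, Z j p * x p) := by
      have := Finset.sum_erase_add Finset.univ (fun p => Z j p * x p) (Finset.mem_univ j)
      rw [hx0] at this
      have : ∑ p ∈ Finset.univ.erase j, Z j p * x p + Z j j * x j = 1 := this
      rw [hd j] at this; linarith
    calc |x j - 1| = |∑ p ∈ Finset.univ.erase j, Z j p * x p| := by rw [hsplit, abs_neg]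
      _ ≤ ∑ p ∈ Finset.univ.erase j, |Z j p * x p| := Finset.abs_sum_le_sum_abs _ _
      _ ≤ ∑ _p ∈ Finset.univ.erase j, q * |x i0| := by
          refine Finset.sum_le_sum fun p hp => ?_
          have hpj : p ≠ j := Finset.ne_of_mem_erase hp
          rw [abs_mul]
          exact mul_le_mul (hod j p (Ne.symm hpj)) (hmax p (Finset.mem_univ p))
            (abs_nonneg _) hq
      _ = c * |x i0| := by
          rw [Finset.sum_const, Finset.card_erase_of_mem (Finset.mem_univ j),
            Finset.card_univ, Fintype.card_fin, nsmul_eq_mul]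
          have hk1 : 1 ≤ k := j.pos
          have : ((k - 1 : ℕ) : ℝ) = (k : ℝ) - 1 := by
            push_cast [Nat.cast_sub hk1]; ring
          rw [hcdef, this]; ring
  -- bound the max
  have hM : |x i0| ≤ 1 + c * |x i0| := by
    have := key i0
    have habs := abs_sub_abs_le_abs_sub (x i0) 1
    simp only [abs_one] at habs
    linarith
  have hMb : |x i0| * (1 - c) ≤ 1 := by nlinarith
  have hxi : x i - 1 ≥ -(c * |x i0|) := by
    have := key i
    have := neg_abs_le (x i - 1)
    linarith [key i]
  nlinarith [abs_nonneg (x i0)]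

theorem stmt_8 (k : ℕ) (hk : 2 ≤ k) (θ lam : ℝ) (hθ : 0 < θ) (hlam : 0 < lam)
    (q r : ℝ) (hq : q = Real.exp (-θ * lam)) (hr : r = Real.exp (-(2 * θ) * lam))
    (hsmall : ((k : ℝ) - 1) * q < 1 / 4)
    (a b : Fin k) (hab : a ≠ b)
    (Z : ℝ → Matrix (Fin k) (Fin k) ℝ)
    (hsymm : ∀ t, (Z t).IsSymm)
    (hdiag : ∀ t i, Z t i i = 1)
    (hZab : ∀ t, Z t a b = Real.exp (-θ * t))
    (hZba : ∀ t, Z t b a = Real.exp (-θ * t))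
    (hconst : ∀ i j, i ≠ j → ¬((i = a ∧ j = b) ∨ (i = b ∧ j = a)) →
      ∀ s t, Z s i j = Z t i j)
    (hrange : ∀ t ∈ Set.Icc lam (2 * lam), ∀ i j, i ≠ j →
      ¬((i = a ∧ j = b) ∨ (i = b ∧ j = a)) → Z t i j ∈ Set.Icc r q) :
    (∀ t ∈ Set.Icc lam (2 * lam), IsUnit (Z t).det) ∧
    StrictMonoOn (fun t => ∑ i, ∑ j, (Z t)⁻¹ i j) (Set.Icc lam (2 * lam)) ∧
    (∑ i, ∑ j, (Z (2 * lam))⁻¹ i j) > (∑ i, ∑ j, (Z lam)⁻¹ i j) := by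
  have hq0 : 0 ≤ q := le_of_lt (hq ▸ Real.exp_pos _)
  -- off-diagonal bound for all t in the interval
  have hod : ∀ t ∈ Set.Icc lam (2 * lam), ∀ i j, i ≠ j → |Z t i j| ≤ q := by
    intro t ht i j hij
    by_cases hcase : (i = a ∧ j = b) ∨ (i = b ∧ j = a)
    · have hval : Z t i j = Real.exp (-θ * t) := by
        rcases hcase with ⟨h1, h2⟩ | ⟨h1, h2⟩
        · rw [h1, h2]; exact hZab t
        · rw [h1, h2]; exact hZba t
      rw [hval, abs_of_pos (Real.exp_pos _), hq]
      apply Real.exp_le_exp.mpr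
      nlinarith [ht.1]
    · obtain ⟨h1, h2⟩ := hrange t ht i j hij hcase
      have hr0 : 0 < r := hr ▸ Real.exp_pos _
      rw [abs_of_pos (lt_of_lt_of_le hr0 h1)]; exact h2
  have hc1 : ((k : ℝ) - 1) * q < 1 := by linarith
  have hc2 : ((k : ℝ) - 1) * q < 1 / 2 := by linarith
  -- invertibility
  have hunit : ∀ t ∈ Set.Icc lam (2 * lam), IsUnit (Z t).det := by
    intro t ht
    rw [isUnit_iff_ne_zero]
    intro hdet
    obtain ⟨v, hv, hv0⟩ := (Matrix.exists_mulVec_eq_zero_iff).mpr hdet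
    exact hv (aux_ker_zero q hq0 hc1 (Z t) (hdiag t) (hod t ht) v hv0)
  -- properties of row sums of the inverse
  have hinv : ∀ t ∈ Set.Icc lam (2 * lam), (Z t) * (Z t)⁻¹ = 1 := by
    intro t ht
    exact Matrix.mul_nonsing_inv _ (hunit t ht)
  have hxsol : ∀ t ∈ Set.Icc lam (2 * lam),
      (Z t).mulVec ((Z t)⁻¹.mulVec (fun _ => 1)) = fun _ => 1 := by
    intro t ht
    rw [Matrix.mulVec_mulVec, hinv t ht, Matrix.one_mulVec]
  have hpos : ∀ t ∈ Set.Icc lam (2 * lam), ∀ i, 0 < (Z t)⁻¹.mulVec (fun _ => 1) i := by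
    intro t ht
    exact aux_pos q hq0 hc2 (Z t) (hdiag t) (hod t ht) _ (hxsol t ht)
  -- row sums of the inverse
  have hrowsum : ∀ t, ∀ i : Fin k, ∑ j, (Z t)⁻¹ i j = (Z t)⁻¹.mulVec (fun _ => 1) i := by
    intro t i
    simp [Matrix.mulVec, dotProduct]
  -- column sums of the inverse (using symmetry)
  have hinvsymm : ∀ t ∈ Set.Icc lam (2 * lam), ((Z t)⁻¹).IsSymm := by
    intro t ht
    rw [Matrix.IsSymm, Matrix.transpose_nonsing_inv, (hsymm t).eq]
  have hcolsum : ∀ t ∈ Set.Icc lam (2 * lam), ∀ p : Fin k,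
      ∑ i, (Z t)⁻¹ i p = (Z t)⁻¹.mulVec (fun _ => 1) p := by
    intro t ht p
    rw [← hrowsum t p]
    refine Finset.sum_congr rfl fun i _ => ?_
    exact (hinvsymm t ht).apply p i
  -- strict monotonicity
  have hmono : StrictMonoOn (fun t => ∑ i, ∑ j, (Z t)⁻¹ i j) (Set.Icc lam (2 * lam)) := by
    intro s hs t ht hst
    set A : Matrix (Fin k) (Fin k) ℝ := (Z t)⁻¹ with hA
    set B : Matrix (Fin k) (Fin k) ℝ := (Z s)⁻¹ with hB
    set δ : ℝ := Real.exp (-θ * s) - Real.exp (-θ * t) with hδ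
    have hδpos : 0 < δ := by
      rw [hδ, sub_pos]
      apply Real.exp_lt_exp.mpr
      nlinarith
    have hDmat : Z s - Z t = δ • (Matrix.single a b (1:ℝ)
        + Matrix.single b a (1:ℝ)) := by
      ext p p'
      by_cases h1 : p = a ∧ p' = b
      · obtain ⟨e1, e2⟩ := h1
        subst e1; subst e2
        simp [Matrix.single, hab, hZab, hδ]
      · by_cases h2 : p = b ∧ p' = a
        · obtain ⟨e1, e2⟩ := h2
          subst e1; subst e2
          simp [Matrix.single, hab.symm, hab, hZba, hδ]
        · have hz : Z s p p' = Z t p p' := by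
            by_cases hpp : p = p'
            · subst hpp; rw [hdiag s, hdiag t]
            · exact hconst p p' hpp (by tauto) s t
          have e1 : ¬(a = p ∧ b = p') := fun ⟨u, v⟩ => h1 ⟨u.symm, v.symm⟩
          have e2 : ¬(b = p ∧ a = p') := fun ⟨u, v⟩ => h2 ⟨u.symm, v.symm⟩
          simp [Matrix.single, e1, e2, hz]
    -- difference of inverses
    have hdiff : A - B = A * (Z s - Z t) * B := by
      rw [Matrix.mul_sub, Matrix.sub_mul]
      rw [hA, hB, Matrix.nonsing_inv_mul _ (hunit t ht), Matrix.mul_assoc,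
        Matrix.mul_nonsing_inv _ (hunit s hs), Matrix.one_mul, Matrix.mul_one]
    have sumAEB : ∀ (a' b' : Fin k),
        ∑ i, ∑ j, (A * Matrix.single a' b' (1:ℝ) * B) i j
          = (∑ i, A i a') * (∑ j, B b' j) := by
      intro a' b'
      rw [Finset.sum_mul_sum]
      refine Finset.sum_congr rfl fun i _ => Finset.sum_congr rfl fun j _ => ?_
      rw [Matrix.mul_assoc, Matrix.mul_apply]
      rw [Finset.sum_eq_single a']
      · rw [Matrix.single_mul_apply_same, one_mul]
      · intro p _ hp
        rw [Matrix.single_mul_apply_of_ne _ _ _ _ _ hp, mul_zero]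
      · intro h; exact absurd (Finset.mem_univ a') h
    have hFdiff : (∑ i, ∑ j, A i j) - (∑ i, ∑ j, B i j)
        = δ * (((∑ i, A i a) * (∑ j, B b j)) + ((∑ i, A i b) * (∑ j, B a j))) := by
      have : (∑ i, ∑ j, A i j) - (∑ i, ∑ j, B i j) = ∑ i, ∑ j, (A - B) i j := by
        simp [Finset.sum_sub_distrib]
      rw [this, hdiff, hDmat]
      have expand : A * (δ • (Matrix.single a b (1:ℝ)
          + Matrix.single b a (1:ℝ))) * B
          = δ • (A * Matrix.single a b (1:ℝ) * B
            + A * Matrix.single b a (1:ℝ) * B) := by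
        rw [Matrix.mul_smul, Matrix.smul_mul, Matrix.mul_add, Matrix.add_mul]
      rw [expand]
      have e1 := sumAEB a b
      have e2 := sumAEB b a
      simp only [Matrix.smul_apply, Matrix.add_apply, smul_eq_mul, mul_add,
        Finset.sum_add_distrib, ← Finset.mul_sum]
      rw [e1, e2]
    have pa : 0 < ∑ i, A i a := by rw [hA, hcolsum t ht a]; exact hpos t ht a
    have pb : 0 < ∑ i, A i b := by rw [hA, hcolsum t ht b]; exact hpos t ht b
    have va : 0 < ∑ j, B a j := by rw [hB, hrowsum s a]; exact hpos s hs a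
    have vb : 0 < ∑ j, B b j := by rw [hB, hrowsum s b]; exact hpos s hs b
    have hposdiff : 0 < δ * (((∑ i, A i a) * (∑ j, B b j)) + ((∑ i, A i b) * (∑ j, B a j))) :=
      mul_pos hδpos (add_pos (mul_pos pa vb) (mul_pos pb va))
    show (∑ i, ∑ j, (Z s)⁻¹ i j) < ∑ i, ∑ j, (Z t)⁻¹ i j
    rw [← hA, ← hB]
    linarith [hFdiff, hposdiff]
  refine ⟨hunit, hmono, ?_⟩
  have h1 : lam ∈ Set.Icc lam (2 * lam) := ⟨le_refl _, by linarith⟩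
  have h2 : 2 * lam ∈ Set.Icc lam (2 * lam) := ⟨by linarith, le_refl _⟩
  exact hmono h1 h2 (by linarith)
end

section
/- Let k ≥ 2 and let 0 < r < q be real numbers with (k−1)·q < 1/4. Let Z be a symmetric k×k real matrix with all diagonal entries equal to 1 and all off-diagonal entries in [r, q], and suppose Z_{ab} = Z_{ba} = q for some pair of indices a ≠ b. Let Z′ be the matrix obtained from Z by replacing the two entries at positions (a,b) and (b,a) by r, leaving all other entries unchanged. Then Z and Z′ are both invertible and 𝟙ᵀ (Z′)⁻¹ 𝟙 > 𝟙ᵀ Z⁻¹ 𝟙. -/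
open Matrix Finset

lemma sp_bound {k : ℕ} (hk : 2 ≤ k) {q : ℝ} (hq : 0 ≤ q)
    (hsmall : ((k : ℝ) - 1) * q < 1 / 4)
    {M : Matrix (Fin k) (Fin k) ℝ}
    (hdiag : ∀ i, M i i = 1)
    (hoff : ∀ i j, i ≠ j → |M i j| ≤ q)
    {x y : Fin k → ℝ} (hxy : M *ᵥ x = y) {c : ℝ}
    (hc : ∀ j, |y j| ≤ c) :
    ∀ i, |x i| ≤ (4 / 3) * c := by
  have hk1 : (1 : ℝ) ≤ (k : ℝ) := by exact_mod_cast Nat.one_le_of_lt hk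
  obtain ⟨i₀, -, hi₀⟩ := Finset.exists_max_image univ (fun i => |x i|) ⟨⟨0, by omega⟩, mem_univ _⟩
  have hmax : ∀ j, |x j| ≤ |x i₀| := fun j => hi₀ j (mem_univ _)
  -- bound the max
  have hyi : y i₀ = ∑ j, M i₀ j * x j := by
    rw [← hxy]; rfl
  have hsplit : x i₀ = y i₀ - ∑ j ∈ univ.erase i₀, M i₀ j * x j := by
    rw [hyi, ← Finset.add_sum_erase _ _ (mem_univ i₀), hdiag, one_mul]
    ring
  have hbnd : |x i₀| ≤ c + ((k : ℝ) - 1) * q * |x i₀| := by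
    have hterm : ∀ j ∈ univ.erase i₀, |M i₀ j * x j| ≤ q * |x i₀| := by
      intro j hj
      rw [abs_mul]
      exact mul_le_mul (hoff i₀ j (Finset.ne_of_mem_erase hj).symm) (hmax j)
        (abs_nonneg _) hq
    calc |x i₀| ≤ |y i₀| + |∑ j ∈ univ.erase i₀, M i₀ j * x j| := by
          rw [hsplit]; exact abs_sub _ _
      _ ≤ c + ∑ j ∈ univ.erase i₀, |M i₀ j * x j| :=
          add_le_add (hc i₀) (Finset.abs_sum_le_sum_abs _ _)
      _ ≤ c + ∑ j ∈ univ.erase i₀, q * |x i₀| :=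
          add_le_add le_rfl (Finset.sum_le_sum hterm)
      _ = c + ((k : ℝ) - 1) * q * |x i₀| := by
          rw [Finset.sum_const, nsmul_eq_mul,
            Finset.card_erase_of_mem (mem_univ _), Finset.card_univ, Fintype.card_fin]
          have h1 : 1 ≤ k := by omega
          push_cast [Nat.cast_sub h1]
          ring
  have h34 : |x i₀| ≤ (4 / 3) * c := by
    nlinarith [abs_nonneg (x i₀), hmax i₀]
  intro i
  exact le_trans (hmax i) h34

lemma sp_main {k : ℕ} (hk : 2 ≤ k) {q : ℝ} (hq : 0 ≤ q)
    (hsmall : ((k : ℝ) - 1) * q < 1 / 4)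
    {M : Matrix (Fin k) (Fin k) ℝ}
    (hdiag : ∀ i, M i i = 1)
    (hoff : ∀ i j, i ≠ j → |M i j| ≤ q) :
    IsUnit M.det ∧ ∀ i, 0 < (M⁻¹ *ᵥ (fun _ => (1 : ℝ))) i := by
  have hdet : IsUnit M.det := by
    rw [isUnit_iff_ne_zero]
    intro h0
    obtain ⟨v, hv, hMv⟩ := (Matrix.exists_mulVec_eq_zero_iff).2 h0
    have := sp_bound hk hq hsmall hdiag hoff hMv (c := 0)
      (fun j => by simp) -- |0| ≤ 0
    apply hv
    funext i
    have := this i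
    have := abs_nonneg (v i)
    simp only [mul_zero] at *
    have : |v i| = 0 := le_antisymm ‹|v i| ≤ 0› ‹0 ≤ |v i|›
    simpa using abs_eq_zero.mp this
  refine ⟨hdet, ?_⟩
  set x := M⁻¹ *ᵥ (fun _ => (1 : ℝ)) with hx
  have hMx : M *ᵥ x = (fun _ => (1 : ℝ)) := by
    rw [hx, Matrix.mulVec_mulVec, Matrix.mul_nonsing_inv _ hdet, Matrix.one_mulVec]
  have hb : ∀ j, |x j| ≤ (4 / 3) * 1 :=
    sp_bound hk hq hsmall hdiag hoff hMx (fun j => by simp)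
  intro i
  have hxi : x i = 1 - ∑ j ∈ univ.erase i, M i j * x j := by
    have h1 : (1 : ℝ) = ∑ j, M i j * x j := by
      have := congrFun hMx i
      simpa [Matrix.mulVec, dotProduct] using this.symm
    rw [h1, ← Finset.add_sum_erase _ _ (mem_univ i), hdiag, one_mul]
    ring
  have hsum : ∑ j ∈ univ.erase i, M i j * x j ≤ ((k : ℝ) - 1) * q * (4 / 3) := by
    calc ∑ j ∈ univ.erase i, M i j * x j
        ≤ ∑ j ∈ univ.erase i, q * (4 / 3) := by
          apply Finset.sum_le_sum
          intro j hj
          calc M i j * x j ≤ |M i j * x j| := le_abs_self _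
            _ = |M i j| * |x j| := abs_mul _ _
            _ ≤ q * (4 / 3) := mul_le_mul (hoff i j (Finset.ne_of_mem_erase hj).symm)
                (by simpa using hb j) (abs_nonneg _) hq
      _ = ((k : ℝ) - 1) * q * (4 / 3) := by
          rw [Finset.sum_const, nsmul_eq_mul,
            Finset.card_erase_of_mem (mem_univ _), Finset.card_univ, Fintype.card_fin]
          have h1 : 1 ≤ k := by omega
          push_cast [Nat.cast_sub h1]
          ring
  have : ((k : ℝ) - 1) * q * (4 / 3) < 1 / 3 := by nlinarith
  rw [hxi]
  linarith

set_option maxHeartbeats 1600000 in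
theorem stmt_9 (k : ℕ) (hk : 2 ≤ k) (q r : ℝ) (hr : 0 < r) (hrq : r < q)
    (hsmall : ((k : ℝ) - 1) * q < 1 / 4)
    (a b : Fin k) (hab : a ≠ b)
    (Z : Matrix (Fin k) (Fin k) ℝ)
    (hsymm : Z.IsSymm)
    (hdiag : ∀ i, Z i i = 1)
    (hrange : ∀ i j, i ≠ j → Z i j ∈ Set.Icc r q)
    (hZab : Z a b = q) (hZba : Z b a = q)
    (Z' : Matrix (Fin k) (Fin k) ℝ)
    (hZ' : Z' = fun i j =>
      if (i = a ∧ j = b) ∨ (i = b ∧ j = a) then r else Z i j) :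
    IsUnit Z.det ∧ IsUnit Z'.det ∧
    (∑ i, ∑ j, Z'⁻¹ i j) > (∑ i, ∑ j, Z⁻¹ i j) := by
  have hq : (0 : ℝ) ≤ q := le_of_lt (hr.trans hrq)
  have hZoff : ∀ i j, i ≠ j → |Z i j| ≤ q := by
    intro i j hij
    obtain ⟨h1, h2⟩ := hrange i j hij
    rw [abs_of_nonneg (le_trans hr.le h1)]; exact h2
  have hZ'diag : ∀ i, Z' i i = 1 := by
    intro i
    rw [hZ']
    simp only
    rw [if_neg, hdiag]
    rintro (⟨h1, h2⟩ | ⟨h1, h2⟩)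
    · exact hab (h1.symm.trans h2)
    · exact hab (h2.symm.trans h1)
  have hZ'off : ∀ i j, i ≠ j → |Z' i j| ≤ q := by
    intro i j hij
    rw [hZ']
    simp only
    split
    · rw [abs_of_nonneg hr.le]; exact hrq.le
    · exact hZoff i j hij
  obtain ⟨hZdet, hZpos⟩ := sp_main hk hq hsmall hdiag hZoff
  obtain ⟨hZ'det, hZ'pos⟩ := sp_main hk hq hsmall hZ'diag hZ'off
  refine ⟨hZdet, hZ'det, ?_⟩
  -- symmetry
  have hZ'symm : Z'.IsSymm := by
    rw [Matrix.IsSymm]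
    ext i j
    rw [Matrix.transpose_apply, hZ']
    simp only
    by_cases h1 : (j = a ∧ i = b) ∨ (j = b ∧ i = a)
    · rw [if_pos h1, if_pos (by tauto)]
    · rw [if_neg h1, if_neg (by tauto)]
      exact hsymm.apply i j
  have hSinv : (Z⁻¹)ᵀ = Z⁻¹ := by
    rw [Matrix.transpose_nonsing_inv, hsymm]
  have hS'inv : (Z'⁻¹)ᵀ = Z'⁻¹ := by
    rw [Matrix.transpose_nonsing_inv, hZ'symm]
  -- identity
  have hid : Z'⁻¹ - Z⁻¹ = Z'⁻¹ * (Z - Z') * Z⁻¹ := by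
    rw [Matrix.mul_sub, Matrix.sub_mul, Matrix.mul_assoc,
      Matrix.mul_nonsing_inv _ hZdet, Matrix.nonsing_inv_mul _ hZ'det,
      Matrix.mul_one, Matrix.one_mul]
  -- entrywise description of Z - Z'
  have hD : ∀ l p, (Z - Z') l p =
      (if l = a then (if p = b then q - r else 0) else 0) +
      (if l = b then (if p = a then q - r else 0) else 0) := by
    intro l p
    rw [Matrix.sub_apply, hZ']
    simp only
    by_cases h1 : l = a <;> by_cases h2 : p = b <;> by_cases h3 : l = b <;>
      by_cases h4 : p = a <;> simp_all
  have hT : ∀ i j, (Z'⁻¹ * (Z - Z') * Z⁻¹) i j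
      = (q - r) * (Z'⁻¹ i a * Z⁻¹ b j + Z'⁻¹ i b * Z⁻¹ a j) := by
    intro i j
    have hmid : ∀ l, ((Z - Z') * Z⁻¹) l j =
        (if l = a then (q - r) * Z⁻¹ b j else 0) +
        (if l = b then (q - r) * Z⁻¹ a j else 0) := by
      intro l
      rw [Matrix.mul_apply]
      simp only [hD, add_mul, ite_mul, zero_mul, Finset.sum_add_distrib,
        Finset.sum_ite_eq', Finset.mem_univ, if_true]
      by_cases h1 : l = a <;> by_cases h2 : l = b <;> simp [h1, h2]
    rw [Matrix.mul_assoc, Matrix.mul_apply]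
    simp only [hmid, mul_add, mul_ite, mul_zero, Finset.sum_add_distrib,
      Finset.sum_ite_eq', Finset.mem_univ, if_true]
    ring
  have hdiff : (∑ i, ∑ j, Z'⁻¹ i j) - (∑ i, ∑ j, Z⁻¹ i j)
      = (q - r) * ((∑ i, Z'⁻¹ i a) * (∑ j, Z⁻¹ b j)
        + (∑ i, Z'⁻¹ i b) * (∑ j, Z⁻¹ a j)) := by
    rw [← Finset.sum_sub_distrib]
    simp_rw [← Finset.sum_sub_distrib, ← Matrix.sub_apply, hid, hT]
    rw [Finset.sum_mul_sum, Finset.sum_mul_sum]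
    simp only [mul_add, Finset.sum_add_distrib, Finset.mul_sum]
  -- positivity of row sums of the inverses
  have hposZ : ∀ i, 0 < ∑ j, Z⁻¹ i j := by
    intro i
    have := hZpos i
    simpa [Matrix.mulVec, dotProduct] using this
  have hposZ' : ∀ i, 0 < ∑ j, Z'⁻¹ i j := by
    intro i
    have := hZ'pos i
    simpa [Matrix.mulVec, dotProduct] using this
  have hcolZ'a : (0 : ℝ) < ∑ i, Z'⁻¹ i a := by
    have : ∀ i, Z'⁻¹ i a = Z'⁻¹ a i := by
      intro i
      conv_lhs => rw [← hS'inv]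
      rw [Matrix.transpose_apply]
    simpa [this] using hposZ' a
  have hcolZ'b : (0 : ℝ) < ∑ i, Z'⁻¹ i b := by
    have : ∀ i, Z'⁻¹ i b = Z'⁻¹ b i := by
      intro i
      conv_lhs => rw [← hS'inv]
      rw [Matrix.transpose_apply]
    simpa [this] using hposZ' b
  have hqr : 0 < q - r := by linarith
  nlinarith [mul_pos hcolZ'a (hposZ b), mul_pos hcolZ'b (hposZ a),
    mul_pos hqr (add_pos (mul_pos hcolZ'a (hposZ b)) (mul_pos hcolZ'b (hposZ a)))]
end

section
/- Let G be a simple graph on a finite vertex set V, let θ > 0, let k ≥ 2, and let λ > 0 satisfy (k−1)·exp(−θλ) < 1/4. Set q = exp(−θλ) and r = exp(−2θλ). For a subset S ⊆ V of cardinality k, let Z_S be the k×k matrix indexed by S with (Z_S)_{uu} = 1, (Z_S)_{uv} = q if u ≠ v are adjacent in G, and (Z_S)_{uv} = r if u ≠ v are not adjacent. Then Z_S is invertible; if S is an independent set of G then 𝟙ᵀ Z_S⁻¹ 𝟙 = k/(1 + (k−1)·r); and if S contains at least one edge of G then 𝟙ᵀ Z_S⁻¹ 𝟙 < k/(1 +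 (k−1)·r). -/
/-!
Write `Z = (1 - r) I + r J + (q - r) A` with `A` the adjacency matrix of the graph induced on `S`,
and let `x = Z⁻¹ 𝟙`. Summing the equations `Z x = 𝟙` column by column gives
  `(1 + (k - 1) r) ∑ x + (q - r) ∑ᵥ deg v · xᵥ = k`.
For an independent set the degree term vanishes. Otherwise, `Z` is strictly diagonally dominant
with off-diagonal row mass `δ = (k - 1) q < 1/2`, so `‖x‖∞ ≤ 1 / (1 - δ)` and every
`xᵤ ≥ 1 - δ / (1 - δ) > 0`; since `q > r`, the degree term is then positive.
Invertibility is the Levy–Desplanques theorem.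
-/

open Finset Matrix

section DiagonallyDominant

variable {ι : Type*} [Fintype ι] [DecidableEq ι]

theorem Matrix.mulVec_apply_eq_add_sum_erase {A : Matrix ι ι ℝ} {u : ι} (hu : A u u = 1)
    (x : ι → ℝ) : (A *ᵥ x) u = x u + ∑ v ∈ univ.erase u, A u v * x v := by
  rw [mulVec, dotProduct, ← add_sum_erase _ _ (mem_univ u), hu, one_mul]

theorem Matrix.abs_sum_erase_mul_le {A : Matrix ι ι ℝ} {u : ι} {δ : ℝ}
    (h : ∑ v ∈ univ.erase u, |A u v| ≤ δ) (x : ι → ℝ) :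
    |∑ v ∈ univ.erase u, A u v * x v| ≤ δ * ‖x‖ :=
  calc |∑ v ∈ univ.erase u, A u v * x v| ≤ ∑ v ∈ univ.erase u, |A u v| * ‖x‖ := by
        refine (abs_sum_le_sum_abs _ _).trans (sum_le_sum fun v _ => ?_)
        rw [abs_mul]
        exact mul_le_mul_of_nonneg_left (norm_le_pi_norm x v) (abs_nonneg _)
    _ ≤ δ * ‖x‖ := by rw [← sum_mul]; exact mul_le_mul_of_nonneg_right h (norm_nonneg x)

theorem Matrix.pos_of_mulVec_eq_one {A : Matrix ι ι ℝ} {δ : ℝ} (hdiag : ∀ u, A u u = 1)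
    (hrow : ∀ u, ∑ v ∈ univ.erase u, |A u v| ≤ δ) (hδ : δ < 1 / 2) {x : ι → ℝ}
    (hx : A *ᵥ x = fun _ => 1) (u : ι) : 0 < x u := by
  have hδ0 : 0 ≤ δ := (sum_nonneg fun v _ => abs_nonneg (A u v)).trans (hrow u)
  have hx_eq : ∀ w, x w = 1 - ∑ v ∈ univ.erase w, A w v * x v := fun w => by
    have := congrFun hx w
    rw [mulVec_apply_eq_add_sum_erase (hdiag w)] at this
    linarith
  have hnorm : ‖x‖ ≤ 1 + δ * ‖x‖ := by
    refine (pi_norm_le_iff_of_nonneg (by positivity)).2 fun w => ?_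
    rw [Real.norm_eq_abs, hx_eq w]
    refine (abs_sub _ _).trans ?_
    rw [abs_one]
    linarith [abs_sum_erase_mul_le (hrow w) x]
  have hoff := (abs_le.1 (abs_sum_erase_mul_le (hrow u) x)).2
  rw [hx_eq u]
  nlinarith [norm_nonneg x]

end DiagonallyDominant

section SimilarityMatrix

variable {ι : Type*} [DecidableEq ι] (H : SimpleGraph ι) [DecidableRel H.Adj] (q r : ℝ)

def similarityMatrix : Matrix ι ι ℝ :=
  Matrix.of fun u v => if u = v then 1 else if H.Adj u v then q else r

theorem similarityMatrix_apply_self (u : ι) : similarityMatrix H q r u u = 1 := by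
  simp [similarityMatrix]

theorem similarityMatrix_eq_add_adjMatrix :
    similarityMatrix H q r =
      (1 - r) • 1 + r • Matrix.of (fun _ _ => 1) + (q - r) • H.adjMatrix ℝ := by
  ext u v
  by_cases huv : u = v
  · subst huv; simp [similarityMatrix]
  · by_cases hadj : H.Adj u v <;> simp [similarityMatrix, huv, hadj, one_apply_ne huv]

variable [Fintype ι]

theorem sum_abs_similarityMatrix_erase_le {q r : ℝ} (hr : 0 ≤ r) (hrq : r ≤ q) (u : ι) :
    ∑ v ∈ univ.erase u, |similarityMatrix H q r u v| ≤ (Fintype.card ι - 1) * q := by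
  calc _ ≤ ∑ v ∈ univ.erase u, q := sum_le_sum fun v hv => by
          simp only [similarityMatrix, of_apply, if_neg (ne_of_mem_erase hv).symm]
          split_ifs <;> rw [abs_of_nonneg (by linarith)]; linarith
     _ = _ := by
          rw [sum_const, card_erase_of_mem (mem_univ u), card_univ, nsmul_eq_mul,
            Nat.cast_sub (Fintype.card_pos_iff.2 ⟨u⟩), Nat.cast_one]

theorem one_vecMul_similarityMatrix (v : ι) :
    ((fun _ => (1 : ℝ)) ᵥ* similarityMatrix H q r) v =
      1 + (Fintype.card ι - 1) * r + (q - r) * H.degree v := by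
  rw [similarityMatrix_eq_add_adjMatrix, vecMul_add, vecMul_add, vecMul_smul, vecMul_smul,
    vecMul_smul, vecMul_one]
  simp only [Pi.add_apply, Pi.smul_apply, H.adjMatrix_vecMul_apply, sum_const,
    H.card_neighborFinset_eq_degree]
  simp only [smul_eq_mul, mul_one, vecMul, dotProduct, of_apply, sum_const, card_univ,
    nsmul_eq_mul, add_left_inj]
  ring

end SimilarityMatrix

section SimilarityMatrixSums

variable {ι : Type*} [Fintype ι] [DecidableEq ι] {H : SimpleGraph ι} [DecidableRel H.Adj]
  {q r : ℝ} {x : ι → ℝ}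

theorem card_eq_of_similarityMatrix_mulVec_eq_one
    (hx : similarityMatrix H q r *ᵥ x = fun _ => 1) :
    (1 + (Fintype.card ι - 1) * r) * ∑ v, x v + (q - r) * ∑ v, (H.degree v : ℝ) * x v =
      Fintype.card ι := by
  have h := dotProduct_mulVec (fun _ => (1 : ℝ)) (similarityMatrix H q r) x
  rw [hx] at h
  simp only [dotProduct, one_vecMul_similarityMatrix, sum_const, card_univ, nsmul_eq_mul,
    mul_one] at h
  refine Eq.trans ?_ h.symm
  rw [mul_sum, mul_sum, ← sum_add_distrib]
  exact sum_congr rfl fun v _ => by ring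

theorem sum_eq_of_similarityMatrix_mulVec_eq_one_of_forall_not_adj (hH : ∀ u v, ¬ H.Adj u v)
    (hden : 1 + (Fintype.card ι - 1) * r ≠ 0) (hx : similarityMatrix H q r *ᵥ x = fun _ => 1) :
    ∑ v, x v = Fintype.card ι / (1 + (Fintype.card ι - 1) * r) := by
  have hdeg : ∀ v, H.degree v = 0 := fun v => by
    rw [← H.card_neighborFinset_eq_degree, card_eq_zero]
    ext w
    simp [hH]
  rw [eq_div_iff hden, mul_comm]
  simpa [hdeg] using card_eq_of_similarityMatrix_mulVec_eq_one hx

theorem sum_lt_of_similarityMatrix_mulVec_eq_one_of_adj (hrq : r < q)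
    (hden : 0 < 1 + (Fintype.card ι - 1) * r) (hpos : ∀ v, 0 < x v) {a b : ι} (hab : H.Adj a b)
    (hx : similarityMatrix H q r *ᵥ x = fun _ => 1) :
    ∑ v, x v < Fintype.card ι / (1 + (Fintype.card ι - 1) * r) := by
  have hdeg : 0 < ∑ v, (H.degree v : ℝ) * x v := by
    refine sum_pos' (fun v _ => mul_nonneg (Nat.cast_nonneg _) (hpos v).le) ⟨a, mem_univ a, ?_⟩
    exact mul_pos (Nat.cast_pos.2 (H.degree_pos_iff_exists_adj a |>.2 ⟨b, hab⟩)) (hpos a)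
  rw [lt_div_iff₀ hden]
  linarith [card_eq_of_similarityMatrix_mulVec_eq_one hx, mul_pos (sub_pos.2 hrq) hdeg]

end SimilarityMatrixSums

theorem stmt_10 {V : Type*} [Fintype V] [DecidableEq V]
    (G : SimpleGraph V) [DecidableRel G.Adj]
    (θ : ℝ) (hθ : 0 < θ) (k : ℕ) (hk : 2 ≤ k)
    (lam : ℝ) (hlam : 0 < lam)
    (hsmall : ((k : ℝ) - 1) * Real.exp (-θ * lam) < 1 / 4)
    (q r : ℝ) (hq : q = Real.exp (-θ * lam)) (hr : r = Real.exp (-(2 * θ) * lam))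
    (S : Finset V) (hS : S.card = k)
    (Z : Matrix ↥S ↥S ℝ)
    (hZ : Z = Matrix.of fun (u v : ↥S) =>
      if (u : V) = (v : V) then (1 : ℝ)
      else if G.Adj (u : V) (v : V) then q else r) :
    IsUnit Z.det ∧
    ((∀ u ∈ S, ∀ v ∈ S, ¬ G.Adj u v) →
      ∑ u, ∑ v, Z⁻¹ u v = (k : ℝ) / (1 + ((k : ℝ) - 1) * r)) ∧
    ((∃ u ∈ S, ∃ v ∈ S, G.Adj u v) →
      ∑ u, ∑ v, Z⁻¹ u v < (k : ℝ) / (1 + ((k : ℝ) - 1) * r)) := by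
  have hr0 : 0 < r := hr ▸ Real.exp_pos _
  have hrq : r < q := by
    rw [hq, hr]
    exact Real.exp_lt_exp.2 (by nlinarith [mul_pos hθ hlam])
  have hk1 : (1 : ℝ) ≤ k := by exact_mod_cast (by omega : 1 ≤ k)
  have hden : 0 < 1 + ((k : ℝ) - 1) * r := by nlinarith
  have hcard : Fintype.card S = k := by simp [hS]
  have hZH : Z = similarityMatrix (G.comap Subtype.val) q r := by
    rw [hZ]
    ext u v
    simp only [similarityMatrix, of_apply, SimpleGraph.comap_adj, Subtype.ext_iff]
  have hrow : ∀ u, ∑ v ∈ univ.erase u, |Z u v| ≤ ((k : ℝ) - 1) * q := fun u => by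
    simpa [hZH, hcard] using sum_abs_similarityMatrix_erase_le _ hr0.le hrq.le u
  have hdiag : ∀ u, Z u u = 1 := fun u => hZH ▸ similarityMatrix_apply_self _ _ _ u
  have hdet : IsUnit Z.det := isUnit_iff_ne_zero.2 <| det_ne_zero_of_sum_row_lt_diag fun u => by
    simp only [Real.norm_eq_abs, hdiag u, abs_one]
    linarith [hrow u, hq ▸ hsmall]
  set x := Z⁻¹ *ᵥ fun _ => (1 : ℝ)
  have hx : Z *ᵥ x = fun _ => 1 := by rw [mulVec_mulVec, mul_nonsing_inv _ hdet, one_mulVec]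
  have hsum : ∑ u, ∑ v, Z⁻¹ u v = ∑ u, x u := by simp [x, mulVec, dotProduct]
  refine ⟨hdet, fun hind => ?_, fun ⟨a, ha, b, hb, hab⟩ => ?_⟩
  · rw [hsum, ← hcard]
    rw [hZH] at hx
    exact sum_eq_of_similarityMatrix_mulVec_eq_one_of_forall_not_adj
      (fun u v => hind u u.2 v v.2) (hcard ▸ hden.ne') hx
  · have hpos := pos_of_mulVec_eq_one hdiag hrow (by linarith [hq ▸ hsmall]) hx
    rw [hsum, ← hcard]
    rw [hZH] at hx
    exact sum_lt_of_similarityMatrix_mulVec_eq_one_of_adj hrq (hcard ▸ hden) hpos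
      (a := ⟨a, ha⟩) (b := ⟨b, hb⟩) hab hx
end

section
/- Let G be a simple graph on a finite vertex set V with |V| ≥ k ≥ 2, let θ > 0, and let λ > 0 satisfy (k−1)·exp(−θλ) < 1/4. Set q = exp(−θλ) and r = exp(−2θλ), and for each k-element subset S ⊆ V define Z_S as the matrix with diagonal entries 1, entries q between adjacent pairs, and entries r between distinct non-adjacent pairs. Then G has an independent set of size k if and only if there exists a k-element subset S ⊆ V with 𝟙ᵀ Z_S⁻¹ 𝟙 ≥ k/(1 + (k−1)·r). -/
open Finset Matrix
set_option maxHeartbeats 1000000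

private lemma quad_id {n : Type*} [Fintype n] [DecidableEq n] (r : ℝ) (y : n → ℝ) :
    ∑ u, ∑ v, (if u = v then (1:ℝ) else r) * y u * y v
      = (1 - r) * ∑ u, (y u)^2 + r * (∑ u, y u)^2 := by
  have h1 : ∀ u : n, ∑ v, (if u = v then (1:ℝ) else r) * y u * y v
      = (1 - r) * (y u)^2 + r * (y u * ∑ v, y v) := by
    intro u
    have h : ∀ v : n, (if u = v then (1:ℝ) else r) * y u * y v
        = (if u = v then (1 - r) * (y u)^2 else 0) + r * (y u * y v) := by
      intro v
      split_ifs with hv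
      · subst hv; ring
      · ring
    rw [Finset.sum_congr rfl fun v _ => h v, Finset.sum_add_distrib,
        Finset.sum_ite_eq, ← Finset.mul_sum, ← Finset.mul_sum]
    simp
  rw [Finset.sum_congr rfl fun u _ => h1 u, Finset.sum_add_distrib,
      ← Finset.mul_sum, ← Finset.mul_sum]
  congr 1
  rw [← Finset.sum_mul, sq]

theorem stmt_11 {V : Type*} [Fintype V] [DecidableEq V]
    (G : SimpleGraph V) [DecidableRel G.Adj]
    (θ : ℝ) (hθ : 0 < θ) (k : ℕ) (hk : 2 ≤ k) (hkV : k ≤ Fintype.card V)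
    (lam : ℝ) (hlam : 0 < lam)
    (hsmall : ((k : ℝ) - 1) * Real.exp (-θ * lam) < 1 / 4)
    (q r : ℝ) (hq : q = Real.exp (-θ * lam)) (hr : r = Real.exp (-(2 * θ) * lam))
    (Z : (S : Finset V) → Matrix ↥S ↥S ℝ)
    (hZ : ∀ S : Finset V, Z S = Matrix.of fun (u v : ↥S) =>
      if (u : V) = (v : V) then (1 : ℝ)
      else if G.Adj (u : V) (v : V) then q else r) :
    (∃ S : Finset V, S.card = k ∧ ∀ u ∈ S, ∀ v ∈ S, ¬ G.Adj u v) ↔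
    (∃ S : Finset V, S.card = k ∧
      ∑ u, ∑ v, (Z S)⁻¹ u v ≥ (k : ℝ) / (1 + ((k : ℝ) - 1) * r)) := by
  have hq0 : 0 < q := hq ▸ Real.exp_pos _
  have hq1 : q < 1 := by
    rw [hq]
    exact Real.exp_lt_one_iff.2 (by nlinarith)
  have hrq2 : r = q ^ 2 := by
    rw [hq, hr, sq, ← Real.exp_add]
    ring_nf
  have hr0 : 0 < r := by nlinarith
  have hr1 : r < 1 := by nlinarith
  have hrltq : r < q := by nlinarith
  have hk1 : (2:ℝ) ≤ (k:ℝ) := by exact_mod_cast hk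
  have hs : 0 < 1 + ((k:ℝ) - 1) * r := by nlinarith
  have hsm : ((k:ℝ) - 1) * q < 1/4 := hq ▸ hsmall
  set c : ℝ := (1 + ((k:ℝ) - 1) * r)⁻¹ with hcdef
  have hcs : c * (1 + ((k:ℝ) - 1) * r) = 1 := inv_mul_cancel₀ hs.ne'
  have hc0 : 0 < c := inv_pos.2 hs
  constructor
  · rintro ⟨S, hScard, hSind⟩
    refine ⟨S, hScard, ?_⟩
    have hcard : Fintype.card ↥S = k := by rw [Fintype.card_coe, hScard]
    have hBe : ∀ u v : ↥S, Z S u v = if u = v then 1 else r := by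
      intro u v
      rw [hZ]
      by_cases h : (u:V) = (v:V)
      · simp [h, Subtype.ext h]
      · have huv : u ≠ v := fun e => h (by rw [e])
        have : ¬ G.Adj (u:V) (v:V) := hSind u u.2 v v.2
        simp [h, huv, this]
    have hdet : (Z S).det ≠ 0 := by
      intro h0
      obtain ⟨y, hy0, hy⟩ := Matrix.exists_mulVec_eq_zero_iff.2 h0
      have hq0' : ∑ u, y u * ((Z S) *ᵥ y) u = 0 := by
        rw [hy]; simp
      have hqd : (1 - r) * ∑ u, (y u)^2 + r * (∑ u, y u)^2 = 0 := by
        rw [← quad_id]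
        rw [← hq0']
        refine Finset.sum_congr rfl fun u _ => ?_
        rw [Matrix.mulVec, dotProduct, Finset.mul_sum]
        refine Finset.sum_congr rfl fun v _ => ?_
        rw [hBe]; ring
      have hPn : 0 ≤ ∑ u, (y u)^2 := Finset.sum_nonneg fun u _ => sq_nonneg _
      have hP0 : ∑ u, (y u)^2 = 0 := by nlinarith [sq_nonneg (∑ u, y u)]
      apply hy0
      funext u
      have := (Finset.sum_eq_zero_iff_of_nonneg fun v _ => sq_nonneg (y v)).1 hP0 u (Finset.mem_univ u)
      simpa [sq_eq_zero_iff] using this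
    have hunit : IsUnit (Z S).det := isUnit_iff_ne_zero.2 hdet
    have hBc : (Z S) *ᵥ (fun _ => c) = fun _ => (1:ℝ) := by
      funext u
      rw [Matrix.mulVec, dotProduct]
      have hrow : ∑ v, Z S u v = 1 + ((k:ℝ) - 1) * r := by
        have : ∀ v : ↥S, Z S u v = r + (if u = v then 1 - r else 0) := by
          intro v; rw [hBe]; split_ifs <;> ring
        rw [Finset.sum_congr rfl fun v _ => this v, Finset.sum_add_distrib,
            Finset.sum_ite_eq, Finset.sum_const, Finset.card_univ, hcard]
        simp
        ring
      rw [← Finset.sum_mul, hrow, mul_comm]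
      exact hcs
    have hxc : (Z S)⁻¹ *ᵥ (fun _ => (1:ℝ)) = fun _ => c := by
      rw [← hBc, Matrix.mulVec_mulVec, Matrix.nonsing_inv_mul _ hunit, Matrix.one_mulVec]
    have hsum : ∑ u, ∑ v, (Z S)⁻¹ u v = (k:ℝ) * c := by
      have h1 : ∀ u : ↥S, ∑ v, (Z S)⁻¹ u v = c := by
        intro u
        have := congrFun hxc u
        simpa [Matrix.mulVec, dotProduct] using this
      rw [Finset.sum_congr rfl fun u _ => h1 u, Finset.sum_const, Finset.card_univ, hcard]
      simp [nsmul_eq_mul]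
    rw [hsum, ge_iff_le, div_eq_mul_inv]
  · rintro ⟨S, hScard, hSsum⟩
    refine ⟨S, hScard, fun u hu v hv hadj => ?_⟩
    have hcard : Fintype.card ↥S = k := by rw [Fintype.card_coe, hScard]
    set u0 : ↥S := ⟨u, hu⟩
    set v0 : ↥S := ⟨v, hv⟩
    have huv : u0 ≠ v0 := fun e => hadj.ne (congrArg Subtype.val e)
    have hBe : ∀ a b : ↥S, Z S a b =
        if (a:V) = (b:V) then 1 else if G.Adj (a:V) (b:V) then q else r := by
      intro a b; rw [hZ]; rfl
    have hBd : ∀ a : ↥S, Z S a a = 1 := by intro a; rw [hBe]; simp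
    have hBoffpos : ∀ a b : ↥S, a ≠ b → 0 < Z S a b := by
      intro a b hab
      rw [hBe, if_neg (fun h => hab (Subtype.ext h))]
      split_ifs <;> [exact hq0; exact hr0]
    have hBoffle : ∀ a b : ↥S, a ≠ b → Z S a b ≤ q := by
      intro a b hab
      rw [hBe, if_neg (fun h => hab (Subtype.ext h))]
      split_ifs <;> [exact le_refl q; exact hrltq.le]
    have hBge : ∀ a b : ↥S, (if a = b then (1:ℝ) else r) ≤ Z S a b := by
      intro a b
      by_cases hab : a = b
      · subst hab; rw [hBd, if_pos rfl]
      · rw [if_neg hab, hBe, if_neg (fun h => hab (Subtype.ext h))]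
        split_ifs <;> [exact hrltq.le; exact le_refl r]
    have hBuv : Z S u0 v0 = q := by
      rw [hBe, if_neg hadj.ne, if_pos hadj]
    by_cases hunit : IsUnit (Z S).det
    case neg =>
      rw [Matrix.nonsing_inv_apply_not_isUnit _ hunit] at hSsum
      simp at hSsum
      have : 0 < (k:ℝ) / (1 + ((k:ℝ) - 1) * r) := div_pos (by linarith) hs
      linarith
    case pos =>
    obtain ⟨x, hxdef⟩ : ∃ x' : ↥S → ℝ, x' = (Z S)⁻¹ *ᵥ (fun _ => (1:ℝ)) := ⟨_, rfl⟩
    have hBx : (Z S) *ᵥ x = fun _ => (1:ℝ) := by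
      rw [hxdef, Matrix.mulVec_mulVec, Matrix.mul_nonsing_inv _ hunit, Matrix.one_mulVec]
    have hrow : ∀ a : ↥S, ∑ b, Z S a b * x b = 1 := by
      intro a
      have := congrFun hBx a
      simpa [Matrix.mulVec, dotProduct] using this
    set Tt : ℝ := ∑ a, x a with hTtdef
    have hT : ∑ u', ∑ v', (Z S)⁻¹ u' v' = Tt := by
      refine Finset.sum_congr rfl fun a _ => ?_
      simp [hxdef, Matrix.mulVec, dotProduct]
    rw [hT] at hSsum
    -- positivity of x
    have hne : Nonempty ↥S := by
      rw [← Fintype.card_pos_iff, hcard]; omega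
    obtain ⟨a0, -, hmax⟩ := Finset.exists_max_image Finset.univ (fun a => |x a|)
      ⟨Classical.arbitrary ↥S, Finset.mem_univ _⟩
    set m : ℝ := |x a0| with hmdef
    have hm0 : 0 ≤ m := abs_nonneg _
    have hkcast : ((k - 1 : ℕ) : ℝ) = (k:ℝ) - 1 := by
      have : 1 ≤ k := by omega
      push_cast [this]; ring
    have hbound : ∀ a : ↥S, |∑ b ∈ Finset.univ.erase a, Z S a b * x b| ≤ ((k:ℝ) - 1) * (q * m) := by
      intro a
      calc |∑ b ∈ Finset.univ.erase a, Z S a b * x b|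
          ≤ ∑ b ∈ Finset.univ.erase a, |Z S a b * x b| := Finset.abs_sum_le_sum_abs _ _
        _ ≤ ∑ _b ∈ Finset.univ.erase a, q * m := by
            refine Finset.sum_le_sum fun b hb => ?_
            have hab : a ≠ b := (Finset.ne_of_mem_erase hb).symm
            rw [abs_mul, abs_of_pos (hBoffpos a b hab)]
            exact mul_le_mul (hBoffle a b hab) (hmax b (Finset.mem_univ b)) (abs_nonneg _) hq0.le
        _ = ((k:ℝ) - 1) * (q * m) := by
            rw [Finset.sum_const, Finset.card_erase_of_mem (Finset.mem_univ a),
                Finset.card_univ, hcard, nsmul_eq_mul, hkcast]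
    have hsplit : ∀ a : ↥S, x a = 1 - ∑ b ∈ Finset.univ.erase a, Z S a b * x b := by
      intro a
      have h := hrow a
      rw [← Finset.add_sum_erase _ _ (Finset.mem_univ a), hBd, one_mul] at h
      linarith
    have hm43 : m ≤ 4/3 := by
      have h := hsplit a0
      have h2 := hbound a0
      have habs : m = |1 - ∑ b ∈ Finset.univ.erase a0, Z S a0 b * x b| := by
        rw [hmdef, h]
      have h4 : |1 - ∑ b ∈ Finset.univ.erase a0, Z S a0 b * x b|
          ≤ |(1:ℝ)| + |∑ b ∈ Finset.univ.erase a0, Z S a0 b * x b| := abs_sub _ _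
      rw [abs_one] at h4
      have h3 : m ≤ 1 + ((k:ℝ) - 1) * (q * m) := by
        linarith [habs.le]
      have hp : ((k:ℝ) - 1) * q * m ≤ 1/4 * m := mul_le_mul_of_nonneg_right hsm.le hm0
      have hassoc : ((k:ℝ) - 1) * (q * m) = ((k:ℝ) - 1) * q * m := by ring
      linarith
    have hp : ((k:ℝ) - 1) * q * m ≤ 1/4 * m := mul_le_mul_of_nonneg_right hsm.le hm0
    have hassoc : ((k:ℝ) - 1) * (q * m) = ((k:ℝ) - 1) * q * m := by ring
    have hqm13 : ((k:ℝ) - 1) * (q * m) ≤ 1/3 := by linarith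
    have hxpos : ∀ a : ↥S, (1/2 : ℝ) ≤ x a := by
      intro a
      have h := hsplit a
      have h2 := hbound a
      have h3 : ∑ b ∈ Finset.univ.erase a, Z S a b * x b ≤ ((k:ℝ) - 1) * (q * m) :=
        le_trans (le_abs_self _) h2
      linarith
    -- quadratic comparison
    set P : ℝ := ∑ a, (x a)^2 with hPdef
    have hTBx : Tt = ∑ a, ∑ b, Z S a b * x a * x b := by
      calc Tt = ∑ a, x a * 1 := by simp [hTtdef]
        _ = ∑ a, x a * ∑ b, Z S a b * x b := Finset.sum_congr rfl fun a _ => by rw [hrow a]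
        _ = ∑ a, ∑ b, Z S a b * x a * x b := Finset.sum_congr rfl fun a _ => by
            rw [Finset.mul_sum]
            exact Finset.sum_congr rfl fun b _ => by ring
    have hlt : ∑ a, ∑ b, (if a = b then (1:ℝ) else r) * x a * x b
        < ∑ a, ∑ b, Z S a b * x a * x b := by
      refine Finset.sum_lt_sum (fun a _ => ?_) ⟨u0, Finset.mem_univ _, ?_⟩
      · refine Finset.sum_le_sum fun b _ => ?_
        exact mul_le_mul_of_nonneg_right
          (mul_le_mul_of_nonneg_right (hBge a b) (by linarith [hxpos a]))
          (by linarith [hxpos b])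
      · refine Finset.sum_lt_sum (fun b _ => ?_) ⟨v0, Finset.mem_univ _, ?_⟩
        · exact mul_le_mul_of_nonneg_right
            (mul_le_mul_of_nonneg_right (hBge u0 b) (by linarith [hxpos u0]))
            (by linarith [hxpos b])
        · rw [if_neg huv, hBuv]
          exact mul_lt_mul_of_pos_right
            (mul_lt_mul_of_pos_right hrltq (by linarith [hxpos u0]))
            (by linarith [hxpos v0])
    have hQlt : (1 - r) * P + r * Tt^2 < Tt := by
      calc (1 - r) * P + r * Tt^2
          = ∑ a, ∑ b, (if a = b then (1:ℝ) else r) * x a * x b := by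
            rw [hPdef, hTtdef, quad_id r x]
        _ < ∑ a, ∑ b, Z S a b * x a * x b := hlt
        _ = Tt := hTBx.symm
    -- PSD bound
    have hsum_sub : ∑ a, (x a - c) = Tt - (k:ℝ) * c := by
      rw [Finset.sum_sub_distrib, Finset.sum_const, Finset.card_univ, hcard, nsmul_eq_mul]
    have hsum_sq : ∑ a, (x a - c)^2 = P - 2 * c * Tt + (k:ℝ) * c^2 := by
      have h : ∀ a : ↥S, (x a - c)^2 = (x a)^2 - 2 * c * x a + c^2 := fun a => by ring
      rw [Finset.sum_congr rfl fun a _ => h a, Finset.sum_add_distrib, Finset.sum_sub_distrib,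
          ← Finset.mul_sum, Finset.sum_const, Finset.card_univ, hcard, nsmul_eq_mul]
    have hpsd : 0 ≤ (1 - r) * ∑ a, (x a - c)^2 + r * (∑ a, (x a - c))^2 := by
      have h1 : 0 ≤ ∑ a, (x a - c)^2 := Finset.sum_nonneg fun a _ => sq_nonneg _
      have h2' := mul_nonneg (show (0:ℝ) ≤ 1 - r by linarith) h1
      have h3' := mul_nonneg hr0.le (sq_nonneg (∑ a, (x a - c)))
      linarith
    rw [hsum_sub, hsum_sq] at hpsd
    have hkey : (1 - r) * (P - 2 * c * Tt + (k:ℝ) * c^2) + r * (Tt - (k:ℝ) * c)^2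
        = (1 - r) * P + r * Tt^2 - 2 * Tt * (c * (1 + ((k:ℝ) - 1) * r))
          + (k:ℝ) * c * (c * (1 + ((k:ℝ) - 1) * r)) := by ring
    rw [hkey, hcs] at hpsd
    have hTge : (k:ℝ) * c ≤ Tt := by
      rw [div_eq_mul_inv] at hSsum
      exact hSsum
    linarith
end
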